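/- The following identity of ℤ-linear endomorphisms of M_n holds: E1⁺∘E1⁺∘E2 + E1⁻∘E1⁻∘E2 + E2∘E1⁺∘E1⁺ + E2∘E1⁻∘E1⁻ + 2·(E1⁺∘E2∘E1⁻) + 2·(E1⁻∘E2∘E1⁺) = E1⁺∘E1⁻∘E2 + E1⁻∘E1⁺∘E2 + E2∘E1⁺∘E1⁻ + E2∘E1⁻∘E1⁺ + 2·(E1⁺∘E2∘E1⁺) + 2·(E1⁻∘E2∘E1⁻). (Decategorified content of Theorem 3.4(5)(a), lifting the Serre relation e_1²e_2 − 2e_1e_2e_1 + e_2e_1² = 0.) -/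

import Mathlib

/-!
Write `E₁⁺ = E₁⁻ + D` with `D = Σₘ dₘ`, where `dₘ` is the one-site part of `E₁⁺` (`2 ↦ 4`, `3 ↦ 5` at
site `m`), and `E₂ = Σₘ eₘ` (`1 ↦ 2`, `5 ↦ 6` at site `m`). The difference of the two sides of the
relation is `D²E₂ − 2DE₂D + E₂D² = ⁅D, ⁅D, E₂⁆⁆`. Operators at different sites commute, so this
double commutator is `Σₘ ⁅dₘ, ⁅dₘ, eₘ⁆⁆`, and every summand vanishes because `dₘ² = 0` and
`dₘ eₘ dₘ = 0`: no label can be moved by `dₘ`, then `eₘ`, then `dₘ` again.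
-/

/-- The free `ℤ`-module on the sequences `a : Fin n → Fin 8`, modelling the
Grothendieck group `K(𝒪ⁿ)` with basis the classes `b_a` of Verma modules. -/
abbrev GrGroup (n : ℕ) : Type := (Fin n → Fin 8) →₀ ℤ

/-- The basis element `b_a` of the Grothendieck group model. -/
noncomputable def bclass {n : ℕ} (a : Fin n → Fin 8) : GrGroup n := Finsupp.single a 1

/-- The integers `c₁(a), c₂(a), c₃(a)` attached to a sequence `a : Fin n → Fin 8`:
`c₁(a) = #{m : aₘ ∈ {4,5}} − #{m : aₘ ∈ {2,3}}`,
`c₂(a) = #{m : aₘ ∈ {2,6}} − #{m : aₘ ∈ {1,5}}`,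
`c₃(a) = #{m : aₘ odd} − #{m : aₘ even}`. -/
def cseq {n : ℕ} : Fin 3 → (Fin n → Fin 8) → ℤ
  | 0, a => ((Finset.univ.filter fun m => a m = 4 ∨ a m = 5).card : ℤ) -
      ((Finset.univ.filter fun m => a m = 2 ∨ a m = 3).card : ℤ)
  | 1, a => ((Finset.univ.filter fun m => a m = 2 ∨ a m = 6).card : ℤ) -
      ((Finset.univ.filter fun m => a m = 1 ∨ a m = 5).card : ℤ)
  | 2, a => ((Finset.univ.filter fun m => (a m : ℕ) % 2 = 1).card : ℤ) -
      ((Finset.univ.filter fun m => (a m : ℕ) % 2 = 0).card : ℤ)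

/-- `E₁⁺ b_a = Σ_{m : aₘ∈{2,3}} b_{a[m↦aₘ+2]}
+ Σ_{i<j : {aᵢ,aⱼ}={2,3} or {3,4}} b_{a[i↦aᵢ+1][j↦aⱼ+1]}`. -/
noncomputable def E1plus (n : ℕ) : GrGroup n →ₗ[ℤ] GrGroup n :=
  Finsupp.lift (GrGroup n) ℤ (Fin n → Fin 8) (fun a =>
    (∑ m : Fin n, if a m = 2 ∨ a m = 3 then
        bclass (Function.update a m (a m + 2)) else 0) +
    ∑ i : Fin n, ∑ j : Fin n,
      if i < j ∧ ((a i = 2 ∧ a j = 3) ∨ (a i = 3 ∧ a j = 2) ∨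
          (a i = 3 ∧ a j = 4) ∨ (a i = 4 ∧ a j = 3)) then
        bclass (Function.update (Function.update a i (a i + 1)) j (a j + 1)) else 0)

/-- `E₁⁻ b_a = Σ_{i<j : {aᵢ,aⱼ}={2,3} or {3,4}} b_{a[i↦aᵢ+1][j↦aⱼ+1]}`. -/
noncomputable def E1minus (n : ℕ) : GrGroup n →ₗ[ℤ] GrGroup n :=
  Finsupp.lift (GrGroup n) ℤ (Fin n → Fin 8) (fun a =>
    ∑ i : Fin n, ∑ j : Fin n,
      if i < j ∧ ((a i = 2 ∧ a j = 3) ∨ (a i = 3 ∧ a j = 2) ∨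
          (a i = 3 ∧ a j = 4) ∨ (a i = 4 ∧ a j = 3)) then
        bclass (Function.update (Function.update a i (a i + 1)) j (a j + 1)) else 0)


/-- `E₂ b_a = Σ_{m : aₘ∈{1,5}} b_{a[m↦aₘ+1]}`. -/
noncomputable def E2op (n : ℕ) : GrGroup n →ₗ[ℤ] GrGroup n :=
  Finsupp.lift (GrGroup n) ℤ (Fin n → Fin 8) (fun a =>
    ∑ m : Fin n, if a m = 1 ∨ a m = 5 then
      bclass (Function.update a m (a m + 1)) else 0)

open Function

section Commutator

variable {R ι : Type*} [Ring R] [Fintype ι]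

theorem lie_sum_sum_of_commute {A B : ι → R} (h : ∀ m p, m ≠ p → Commute (A m) (B p)) :
    ⁅∑ m, A m, ∑ m, B m⁆ = ∑ m, ⁅A m, B m⁆ := by
  have expand : ⁅∑ m, A m, ∑ m, B m⁆ = ∑ m, ∑ p, ⁅A m, B p⁆ := by
    rw [Ring.lie_def, Finset.sum_mul_sum, Finset.sum_mul_sum,
      Finset.sum_comm (f := fun p m => B p * A m), ← Finset.sum_sub_distrib]
    simp only [← Finset.sum_sub_distrib, Ring.lie_def]
  rw [expand]
  refine Finset.sum_congr rfl fun m _ => Finset.sum_eq_single m (fun p _ hp => ?_) (by simp)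
  exact (h m p (Ne.symm hp)).lie_eq

theorem lie_sum_lie_sum_sum_eq_zero {d e : ι → R}
    (hdd : ∀ m p, m ≠ p → Commute (d m) (d p)) (hde : ∀ m p, m ≠ p → Commute (d m) (e p))
    (hsq : ∀ m, d m * d m = 0) (hded : ∀ m, d m * e m * d m = 0) :
    ⁅∑ m, d m, ⁅∑ m, d m, ∑ m, e m⁆⁆ = 0 := by
  have hde' : ∀ m p, m ≠ p → Commute (d m) ⁅d p, e p⁆ := fun m p h => by
    rw [Ring.lie_def]
    exact ((hdd m p h).mul_right (hde m p h)).sub_right ((hde m p h).mul_right (hdd m p h))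
  rw [lie_sum_sum_of_commute hde, lie_sum_sum_of_commute hde']
  refine Finset.sum_eq_zero fun m _ => ?_
  calc ⁅d m, ⁅d m, e m⁆⁆ = d m * d m * e m - 2 • (d m * e m * d m) + e m * (d m * d m) := by
        rw [Ring.lie_def, Ring.lie_def]; noncomm_ring
    _ = 0 := by rw [hsq, hded]; simp

end Commutator

namespace Finsupp

variable {R X M : Type*} [Semiring R] [AddCommMonoid M] [Module R M]

theorem lift_apply_single_one (g : X → M) (a : X) : lift M R X g (single a 1) = g a := by
  simp [lift_apply, sum_single_index]

theorem lhom_ext_single_one {F G : (X →₀ R) →ₗ[R] M}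
    (h : ∀ a, F (single a 1) = G (single a 1)) : F = G :=
  lhom_ext' fun a => LinearMap.ext_ring (h a)

end Finsupp

section SiteOperator

variable (R : Type*) [CommSemiring R] {ι α : Type*} [DecidableEq ι]

noncomputable def siteOp (P : α → Prop) [DecidablePred P] (f : α → α) (m : ι) :
    Module.End R ((ι → α) →₀ R) :=
  Finsupp.lift _ R _ fun a => if P (a m) then Finsupp.single (update a m (f (a m))) 1 else 0

variable {R}

theorem siteOp_single (P : α → Prop) [DecidablePred P] (f : α → α) (m : ι) (a : ι → α) :
    siteOp R P f m (Finsupp.single a 1) =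
      if P (a m) then Finsupp.single (update a m (f (a m))) 1 else 0 :=
  Finsupp.lift_apply_single_one _ _

theorem siteOp_commute (P Q : α → Prop) [DecidablePred P] [DecidablePred Q] (f g : α → α)
    {m p : ι} (h : m ≠ p) : Commute (siteOp R P f m) (siteOp R Q g p) := by
  refine Finsupp.lhom_ext_single_one fun a => ?_
  simp only [Module.End.mul_apply, siteOp_single]
  by_cases hP : P (a m) <;> by_cases hQ : Q (a p) <;>
    simp [siteOp_single, hP, hQ, update_of_ne h, update_of_ne h.symm, update_comm h]

theorem siteOp_mul_siteOp (P Q : α → Prop) [DecidablePred P] [DecidablePred Q] (f g : α → α)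
    (m : ι) : siteOp R P f m * siteOp R Q g m = siteOp R (fun x => Q x ∧ P (g x)) (f ∘ g) m := by
  refine Finsupp.lhom_ext_single_one fun a => ?_
  simp only [Module.End.mul_apply, siteOp_single]
  by_cases hQ : Q (a m)
  · by_cases hP : P (g (a m)) <;> simp [siteOp_single, hQ, hP]
  · simp [hQ]

theorem siteOp_eq_zero {P : α → Prop} [DecidablePred P] (f : α → α) (m : ι) (h : ∀ x, ¬ P x) :
    siteOp R P f m = 0 :=
  Finsupp.lhom_ext_single_one fun a => by simp [siteOp_single, h]

end SiteOperator

noncomputable def E1siteOp (n : ℕ) (m : Fin n) : Module.End ℤ (GrGroup n) :=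
  siteOp ℤ (fun x => x = 2 ∨ x = 3) (· + 2) m

noncomputable def E2siteOp (n : ℕ) (m : Fin n) : Module.End ℤ (GrGroup n) :=
  siteOp ℤ (fun x => x = 1 ∨ x = 5) (· + 1) m

theorem E1plus_sub_E1minus (n : ℕ) : E1plus n - E1minus n = ∑ m, E1siteOp n m := by
  refine Finsupp.lhom_ext_single_one fun a => ?_
  simp only [LinearMap.sub_apply, LinearMap.sum_apply, E1siteOp, siteOp_single]
  simp only [E1plus, E1minus, bclass, Finsupp.lift_apply_single_one, add_sub_cancel_right]

theorem E2op_eq_sum (n : ℕ) : E2op n = ∑ m, E2siteOp n m := by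
  refine Finsupp.lhom_ext_single_one fun a => ?_
  simp only [LinearMap.sum_apply, E2siteOp, siteOp_single]
  simp only [E2op, bclass, Finsupp.lift_apply_single_one]

theorem E1siteOp_mul_self (n : ℕ) (m : Fin n) : E1siteOp n m * E1siteOp n m = 0 := by
  rw [E1siteOp, siteOp_mul_siteOp]
  exact siteOp_eq_zero _ _ (by decide)

theorem E1siteOp_mul_E2siteOp_mul_E1siteOp (n : ℕ) (m : Fin n) :
    E1siteOp n m * E2siteOp n m * E1siteOp n m = 0 := by
  rw [E1siteOp, E2siteOp, siteOp_mul_siteOp, siteOp_mul_siteOp]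
  exact siteOp_eq_zero _ _ (by decide)

theorem serre_E1E2_relation_general (n : ℕ) :
    E1plus n ∘ₗ E1plus n ∘ₗ E2op n + E1minus n ∘ₗ E1minus n ∘ₗ E2op n +
        E2op n ∘ₗ E1plus n ∘ₗ E1plus n + E2op n ∘ₗ E1minus n ∘ₗ E1minus n +
        2 • (E1plus n ∘ₗ E2op n ∘ₗ E1minus n) + 2 • (E1minus n ∘ₗ E2op n ∘ₗ E1plus n) =
      E1plus n ∘ₗ E1minus n ∘ₗ E2op n + E1minus n ∘ₗ E1plus n ∘ₗ E2op n +
        E2op n ∘ₗ E1plus n ∘ₗ E1minus n + E2op n ∘ₗ E1minus n ∘ₗ E1plus n +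
        2 • (E1plus n ∘ₗ E2op n ∘ₗ E1plus n) + 2 • (E1minus n ∘ₗ E2op n ∘ₗ E1minus n) := by
  rw [← sub_eq_zero]
  simp only [← Module.End.mul_eq_comp]
  calc _ = ⁅E1plus n - E1minus n, ⁅E1plus n - E1minus n, E2op n⁆⁆ := by
        rw [Ring.lie_def, Ring.lie_def]; noncomm_ring
    _ = 0 := by
      rw [E1plus_sub_E1minus, E2op_eq_sum]
      exact lie_sum_lie_sum_sum_eq_zero (fun _ _ h => siteOp_commute _ _ _ _ h)
        (fun _ _ h => siteOp_commute _ _ _ _ h) (E1siteOp_mul_self n)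
        (E1siteOp_mul_E2siteOp_mul_E1siteOp n)

/-- Decategorified Theorem 3.4(5)(a):
`E₁⁺∘E₁⁺∘E₂ + E₁⁻∘E₁⁻∘E₂ + E₂∘E₁⁺∘E₁⁺ + E₂∘E₁⁻∘E₁⁻ + 2(E₁⁺∘E₂∘E₁⁻) + 2(E₁⁻∘E₂∘E₁⁺)
 = E₁⁺∘E₁⁻∘E₂ + E₁⁻∘E₁⁺∘E₂ + E₂∘E₁⁺∘E₁⁻ + E₂∘E₁⁻∘E₁⁺ + 2(E₁⁺∘E₂∘E₁⁺) + 2(E₁⁻∘E₂∘E₁⁻)`,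
lifting the Serre relation `e₁²e₂ − 2e₁e₂e₁ + e₂e₁² = 0`. -/
theorem serre_E1E2_relation (n : ℕ) (hn : 0 < n) :
    E1plus n ∘ₗ E1plus n ∘ₗ E2op n + E1minus n ∘ₗ E1minus n ∘ₗ E2op n +
        E2op n ∘ₗ E1plus n ∘ₗ E1plus n + E2op n ∘ₗ E1minus n ∘ₗ E1minus n +
        2 • (E1plus n ∘ₗ E2op n ∘ₗ E1minus n) + 2 • (E1minus n ∘ₗ E2op n ∘ₗ E1plus n) =
      E1plus n ∘ₗ E1minus n ∘ₗ E2op n + E1minus n ∘ₗ E1plus n ∘ₗ E2op n +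
        E2op n ∘ₗ E1plus n ∘ₗ E1minus n + E2op n ∘ₗ E1minus n ∘ₗ E1plus n +
        2 • (E1plus n ∘ₗ E2op n ∘ₗ E1plus n) + 2 • (E1minus n ∘ₗ E2op n ∘ₗ E1minus n) :=
  serre_E1E2_relation_general n
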